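/- For all n ≥ 1, ∑_{σ ∈ D_n} q^{ℓ_D(σ)} ∏_{i ∈ Rlmin_D(σ)} t_i = ∏_{i=2}^{n} ((1+q^{i-1})[i]_q − 1 + t_i). -/

import Mathlib

/-!
Every signed permutation of `{1, …, n+1}` arises in exactly one way by inserting `n+1` or
`-(n+1)` at some position `k ∈ {0, …, n}` of a signed permutation of `{1, …, n}`. Inserting
`n+1` multiplies `q^ℓ_D` by `q^(n-k)` and creates the new right-to-left minimum `n+1` exactly when
`k = n ≥ 1`; inserting `-(n+1)` multiplies `q^ℓ_D` by `q^(n+k)`, leaves `Rlmin_D` unchanged and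
changes the parity of the number of negative entries. Changing the sign of the entry `±1`
preserves `ℓ_D` and `Rlmin_D` but also changes that parity, so for `n ≥ 1` the generating
functions over even and over odd signed permutations coincide. Hence passing from `D_n` to
`D_{n+1}` multiplies the generating function by
`∑_k q^(n-k) + (t_{n+1} - 1) + ∑_k q^(n+k) = (1 + q^n)[n+1]_q - 1 + t_{n+1}`.
-/

open Finset

open scoped Classical

noncomputable section

variable {n : ℕ}

/-- `u <_F v` : strictly below in the forest order. -/
def strictR (r : Fin n → Fin n → Prop) (u v : Fin n) : Prop := r u v ∧ u ≠ v

/-- A naturally indexed plane forest structure on `Fin n`: a partial order whose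
principal up-sets are chains (roots maximal), with natural indexing. -/
def IsForest (r : Fin n → Fin n → Prop) : Prop :=
  IsPartialOrder (Fin n) r ∧ (∀ v u u', r v u → r v u' → r u u' ∨ r u' u) ∧
    ∀ u v, r u v → u ≤ v

/-- `h_v`: size of the principal order ideal generated by `v`. -/
def hook (r : Fin n → Fin n → Prop) (v : Fin n) : ℕ :=
  (univ.filter fun u => r u v).card

/-- q-integer `[m] = 1 + q + ... + q^(m-1)`. -/
def qInt {R : Type*} [CommRing R] (q : R) (m : ℕ) : R := ∑ i ∈ Finset.range m, q ^ i

/-- inversions of an (unsigned) labeling. -/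
def invF (r : Fin n → Fin n → Prop) (w : Equiv.Perm (Fin n)) : ℕ :=
  (univ.filter fun uv : Fin n × Fin n => strictR r uv.1 uv.2 ∧ w uv.2 < w uv.1).card

/-- a natural (order-preserving) labeling. -/
def NaturalL (r : Fin n → Fin n → Prop) (w : Equiv.Perm (Fin n)) : Prop :=
  ∀ u v, strictR r u v → w u < w v

/-- bottom-to-top maximum positions. -/
def BtmaxF (r : Fin n → Fin n → Prop) (w : Equiv.Perm (Fin n)) : Finset (Fin n) :=
  univ.filter fun v => ∀ u, strictR r u v → w u < w v

/-- label (in 1..n, with convention n+1 for roots) of the parent of `v`;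
for a naturally indexed forest the parent of `v` is the minimal-index vertex strictly above `v`. -/
def parentW (r : Fin n → Fin n → Prop) (w : Equiv.Perm (Fin n)) (v : Fin n) : ℕ :=
  if h : (univ.filter fun u => strictR r v u).Nonempty then
    (w ((univ.filter fun u => strictR r v u).min' h) : ℕ) + 1
  else n + 1

/-- major index: sum of hooks over descents. -/
def majF (r : Fin n → Fin n → Prop) (w : Equiv.Perm (Fin n)) : ℕ :=
  ∑ v ∈ univ.filter (fun v => parentW r w v < (w v : ℕ) + 1), hook r v

/-- M-code of a labeled forest. -/
def mcodeF (r : Fin n → Fin n → Prop) (w : Equiv.Perm (Fin n)) (i : Fin n) : ℕ :=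
  if (w i : ℕ) + 1 < parentW r w i then
    (univ.filter fun u => strictR r u i ∧ (w i : ℕ) + 1 ≤ (w u : ℕ) + 1 ∧
      (w u : ℕ) + 1 ≤ parentW r w i).card
  else
    (univ.filter fun u => strictR r u i ∧ ¬(parentW r w i ≤ (w u : ℕ) + 1 ∧
      (w u : ℕ) + 1 ≤ (w i : ℕ) + 1)).card

/-- cyclic bottom-to-top maxima. -/
def CbtmaxF (r : Fin n → Fin n → Prop) (w : Equiv.Perm (Fin n)) : Finset (Fin n) :=
  univ.filter fun v =>
    if (w v : ℕ) + 1 < parentW r w v then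
      ∀ u, strictR r u v → ¬((w v : ℕ) + 1 ≤ (w u : ℕ) + 1 ∧ (w u : ℕ) + 1 ≤ parentW r w v)
    else
      ∀ u, strictR r u v → (parentW r w v ≤ (w u : ℕ) + 1 ∧ (w u : ℕ) + 1 ≤ (w v : ℕ) + 1)

/-! ### Signed labelings, encoded as a permutation together with a sign function.
`wVal (σ, ε)` is the corresponding signed labeling `V(F) → {±1, …, ±n}`;
this is a bijective encoding of the set `W_B(F)` of signed labelings. -/

def wVal (p : Equiv.Perm (Fin n) × (Fin n → Bool)) (v : Fin n) : ℤ :=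
  (if p.2 v then -1 else 1) * ((p.1 v : ℤ) + 1)

/-- number of negative labels. -/
def n1F (w : Fin n → ℤ) : ℕ := (univ.filter fun v => w v < 0).card

/-- inversions of a signed labeling. -/
def invSF (r : Fin n → Fin n → Prop) (w : Fin n → ℤ) : ℕ :=
  (univ.filter fun uv : Fin n × Fin n => strictR r uv.1 uv.2 ∧ w uv.2 < w uv.1).card

def n2F (r : Fin n → Fin n → Prop) (w : Fin n → ℤ) : ℕ :=
  (univ.filter fun uv : Fin n × Fin n => strictR r uv.1 uv.2 ∧ w uv.1 + w uv.2 < 0).card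

def invBF (r : Fin n → Fin n → Prop) (w : Fin n → ℤ) : ℕ := invSF r w + n1F w + n2F r w

def invDF (r : Fin n → Fin n → Prop) (w : Fin n → ℤ) : ℕ := invSF r w + n2F r w

/-- the A-code of a signed labeled forest. -/
def acodeF (r : Fin n → Fin n → Prop) (w : Fin n → ℤ) (i : Fin n) : ℕ :=
  (univ.filter fun u => strictR r u i ∧ w i < w u).card +
  (univ.filter fun u => strictR r u i ∧ w u + w i < 0).card +
  (if w i < 0 then 1 else 0)

/-- signed bottom-to-top maximum positions. -/
def BtmaxBF (r : Fin n → Fin n → Prop) (w : Fin n → ℤ) : Finset (Fin n) :=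
  univ.filter fun v => 0 < w v ∧ ∀ u, strictR r u v → |w u| < w v

def leafF (r : Fin n → Fin n → Prop) (v : Fin n) : Prop := ∀ u, ¬ strictR r u v

/-- type D bottom-to-top maximum positions. -/
def BtmaxDF (r : Fin n → Fin n → Prop) (w : Fin n → ℤ) : Finset (Fin n) :=
  univ.filter fun v => ¬ leafF r v ∧ 0 < w v ∧ ∀ u, strictR r u v → |w u| < w v

/-! ### The map φ: one sorting step towards a natural labeling, recording the A-code. -/

def stepA (r : Fin n → Fin n → Prop) (i : Fin n) (w : Fin n → ℤ) : Fin n → ℤ :=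
  let A := (univ.filter fun u => r u i).image fun u => (w u).natAbs
  let M := A.max.getD 0
  let l := (A.erase M).sort (· ≤ ·)
  fun u =>
    if u = i then (M : ℤ)
    else if strictR r u i then
      (if w u < 0 then -1 else 1) *
        (l.getD ((univ.filter fun u' => strictR r u' i ∧ (w u').natAbs < (w u).natAbs).card) 0)
    else w u

/-- processing vertices `v_n, v_{n-1}, …, v_1` yields the natural labeling `w'`. -/
def sortA (r : Fin n → Fin n → Prop) (w : Fin n → ℤ) : Fin n → ℤ :=
  ((List.finRange n).reverse).foldl (fun w i => stepA r i w) w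

/-! ### The sorting algorithm for the sorting index. -/

/-- standardized label of `x` in the subtree rooted at `u`. -/
def stdVal (r : Fin n → Fin n → Prop) (u : Fin n) (w : Fin n → ℤ) (x : Fin n) : ℤ :=
  (if w x < 0 then -1 else 1) * (((univ.filter fun y => r y u ∧ |w y| < |w x|).card : ℤ) + 1)

/-- one step of the forest sorting algorithm (placing value `i+1`); the state is
(current labeling, recorded B-code, running total). -/
def sortStepB (r : Fin n → Fin n → Prop) (i : Fin n)
    (s : (Fin n → ℤ) × (Fin n → ℤ) × ℤ) : (Fin n → ℤ) × (Fin n → ℤ) × ℤ :=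
  let w := s.1
  let v := ((univ.filter fun x => |w x| = (i : ℤ) + 1).max).getD i
  let u := ((univ.filter fun x => r v x ∧ |w x| ≤ (i : ℤ) + 1).max).getD i
  let amt : ℤ := |stdVal r u w v| - stdVal r u w u - (if w u < 0 then 1 else 0)
  let w' := if 0 < w v then Function.update (Function.update w u (w v)) v (w u)
            else Function.update (Function.update w u (-(w v))) v (-(w u))
  (w', Function.update s.2.1 u amt, s.2.2 + amt)

def runB (r : Fin n → Fin n → Prop) (w : Fin n → ℤ) : (Fin n → ℤ) × (Fin n → ℤ) × ℤ :=
  ((List.finRange n).reverse).foldl (fun s i => sortStepB r i s) (w, fun _ => (0 : ℤ), 0)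

/-- the natural labeling produced by the sorting algorithm. -/
def sortedB (r : Fin n → Fin n → Prop) (w : Fin n → ℤ) : Fin n → ℤ := (runB r w).1

/-- B-code: `b_i` = amount contributed at the step in which `u = v_i`. -/
def bcodeB (r : Fin n → Fin n → Prop) (w : Fin n → ℤ) : Fin n → ℤ := (runB r w).2.1

/-- the sorting index of a signed labeled forest. -/
def sorBF (r : Fin n → Fin n → Prop) (w : Fin n → ℤ) : ℤ := (runB r w).2.2

/-! ### Cycles of signed permutations. -/

/-- the extension of `g : Fin n → ℤ` (a signed permutation written in one-line notation,
`g i` = image of `i+1`) to `{±1, …, ±n} ⊆ ℤ`. -/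
def extB (g : Fin n → ℤ) : ℤ → ℤ := fun k =>
  if h : 0 < k ∧ k ≤ (n : ℤ) then g ⟨k.toNat - 1, by omega⟩
  else if h' : -(n : ℤ) ≤ k ∧ k < 0 then -g ⟨(-k).toNat - 1, by omega⟩
  else k

/-- absolute values of the minimal-in-absolute-value elements of balanced cycles. -/
def CycBperm (g : Fin n → ℤ) : Finset ℕ :=
  (Finset.Icc 1 n).filter fun m =>
    (∀ j, j ≤ 2 * n → (extB g)^[j] (m : ℤ) ≠ -(m : ℤ)) ∧
    ∀ j, j ≤ 2 * n → (m : ℤ) ≤ |(extB g)^[j] (m : ℤ)|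

/-- the signed permutation `w ∘ w'⁻¹`, where `w'` is the sorted (natural) labeling. -/
def gOf (r : Fin n → Fin n → Prop) (w : Fin n → ℤ) : Fin n → ℤ := fun i =>
  w (((univ.filter fun v => sortedB r w v = (i : ℤ) + 1).max).getD i)

/-- type B minimal cycle vertices of a signed labeled forest. -/
def CycBF (r : Fin n → Fin n → Prop) (w : Fin n → ℤ) : Finset (Fin n) :=
  univ.filter fun v => (sortedB r w v).toNat ∈ CycBperm (gOf r w)

/-! ### Signed permutations as words. -/

/-- the inverse of the signed permutation `g`. -/
def ginv (g : Fin n → ℤ) (i : Fin n) : ℤ :=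
  let j := ((univ.filter fun x => |g x| = (i : ℤ) + 1).max).getD i
  if 0 < g j then (j : ℤ) + 1 else -((j : ℤ) + 1)

def invP (σ : Equiv.Perm (Fin n)) : ℕ :=
  (univ.filter fun ij : Fin n × Fin n => ij.1 < ij.2 ∧ σ ij.2 < σ ij.1).card

def invL (g : Fin n → ℤ) : ℕ :=
  (univ.filter fun ij : Fin n × Fin n => ij.1 < ij.2 ∧ g ij.2 < g ij.1).card

def n2L (g : Fin n → ℤ) : ℕ :=
  (univ.filter fun ij : Fin n × Fin n => ij.1 < ij.2 ∧ g ij.1 + g ij.2 < 0).card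

/-- one step of Straight Selection Sort for signed permutations (placing value `i+1`). -/
def sorStepP (i : Fin n) (s : (Fin n → ℤ) × ℤ) : (Fin n → ℤ) × ℤ :=
  let g := s.1
  let j := ((univ.filter fun x => |g x| = (i : ℤ) + 1).max).getD i
  let amt : ℤ := if 0 < g j then ((i : ℤ) + 1) - ((j : ℤ) + 1)
                 else ((i : ℤ) + 1) + ((j : ℤ) + 1) - 1
  let g' := if 0 < g j then Function.update (Function.update g j (g i)) i (g j)
            else Function.update (Function.update g j (-(g i))) i (-(g j))
  (g', s.2 + amt)

/-- the sorting index of a signed permutation. -/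
def sorBperm (g : Fin n → ℤ) : ℤ :=
  (((List.finRange n).reverse).foldl (fun s i => sorStepP i s) (g, 0)).2


open Function

def IsSignedPerm (n : ℕ) (g : Fin n → ℤ) : Prop :=
  (∀ i, (g i).natAbs ∈ Icc 1 n) ∧ Injective fun i => (g i).natAbs

def signedPerms (n : ℕ) : Finset (Fin n → ℤ) := univ.image wVal

lemma natAbs_wVal (p : Equiv.Perm (Fin n) × (Fin n → Bool)) (i : Fin n) :
    (wVal p i).natAbs = p.1 i + 1 := by
  cases p.2 i <;> simp [wVal] <;> omega

lemma wVal_neg_iff (p : Equiv.Perm (Fin n) × (Fin n → Bool)) (i : Fin n) :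
    wVal p i < 0 ↔ p.2 i := by
  cases h : p.2 i <;> simp [wVal, h] <;> omega

lemma wVal_injective : Injective (wVal (n := n)) := by
  intro p p' h
  refine Prod.ext (Equiv.ext fun i => Fin.ext ?_) (funext fun i => Bool.eq_iff_iff.mpr ?_)
  · have := congrArg Int.natAbs (congrFun h i)
    rw [natAbs_wVal, natAbs_wVal] at this
    omega
  · rw [← wVal_neg_iff, ← wVal_neg_iff, h]

lemma isSignedPerm_wVal (p : Equiv.Perm (Fin n) × (Fin n → Bool)) :
    IsSignedPerm n (wVal p) := by
  refine ⟨fun i => ?_, fun i j h => p.1.injective (Fin.ext ?_)⟩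
  · simp only [natAbs_wVal, mem_Icc]
    omega
  · simp only [natAbs_wVal] at h
    omega

lemma mem_signedPerms {g : Fin n → ℤ} : g ∈ signedPerms n ↔ IsSignedPerm n g := by
  refine ⟨fun hg => ?_, fun hg => ?_⟩
  · obtain ⟨p, -, rfl⟩ := mem_image.mp hg
    exact isSignedPerm_wVal p
  · have hlt i : (g i).natAbs - 1 < n := by have := mem_Icc.mp (hg.1 i); omega
    have hinj : Injective fun i => (⟨(g i).natAbs - 1, hlt i⟩ : Fin n) := fun i j h => by
      have := mem_Icc.mp (hg.1 i); have := mem_Icc.mp (hg.1 j)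
      exact hg.2 (show (g i).natAbs = (g j).natAbs by simp only [Fin.mk.injEq] at h; omega)
    refine mem_image.mpr ⟨(Equiv.ofBijective _ hinj.bijective_of_finite,
      fun i => decide (g i < 0)), mem_univ _, funext fun i => ?_⟩
    have := mem_Icc.mp (hg.1 i)
    by_cases h : g i < 0 <;> simp [wVal, h] <;> omega

namespace IsSignedPerm

variable {g : Fin n → ℤ}

lemma exists_natAbs_eq (hg : IsSignedPerm n g) {m : ℕ} (hm : m ∈ Icc 1 n) :
    ∃ i, (g i).natAbs = m := by
  obtain ⟨p, -, rfl⟩ := mem_image.mp (mem_signedPerms.mpr hg)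
  have := mem_Icc.mp hm
  exact ⟨p.1.symm ⟨m - 1, by omega⟩,
    by rw [natAbs_wVal, Equiv.apply_symm_apply, Fin.val_mk]; omega⟩

lemma abs_lt (hg : IsSignedPerm n g) (i : Fin n) : |g i| < (n + 1 : ℕ) := by
  have := mem_Icc.mp (hg.1 i)
  rw [Int.abs_eq_natAbs]
  omega

lemma insertNth (hg : IsSignedPerm n g) (k : Fin (n + 1)) {x : ℤ} (hx : x.natAbs = n + 1) :
    IsSignedPerm (n + 1) (k.insertNth x g) := by
  have hle i : (g i).natAbs ≤ n := (mem_Icc.mp (hg.1 i)).2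
  refine ⟨k.forall_iff_succAbove.mpr ⟨?_, fun i => ?_⟩, fun i j hij => ?_⟩
  · simp [hx]
  · have := mem_Icc.mp (hg.1 i)
    simp only [Fin.insertNth_apply_succAbove, mem_Icc]
    omega
  · induction i using k.succAboveCases <;> induction j using k.succAboveCases <;>
      simp only [Fin.insertNth_apply_same, Fin.insertNth_apply_succAbove, hx] at hij
    · rfl
    · exact absurd hij.symm (by have := hle ‹_›; omega)
    · exact absurd hij (by have := hle ‹_›; omega)
    · exact congrArg _ (hg.2 hij)

lemma removeNth {g : Fin (n + 1) → ℤ} (hg : IsSignedPerm (n + 1) g) {k : Fin (n + 1)}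
    (hk : (g k).natAbs = n + 1) : IsSignedPerm n (k.removeNth g) := by
  refine ⟨fun i => ?_, fun i j hij => Fin.succAbove_right_injective (hg.2 hij)⟩
  have hne : (g (k.succAbove i)).natAbs ≠ n + 1 := fun h =>
    k.succAbove_ne i (hg.2 (h.trans hk.symm))
  have := mem_Icc.mp (hg.1 (k.succAbove i))
  simp only [Fin.removeNth, mem_Icc]
  omega

lemma eq_of_natAbs_insertNth (hg : IsSignedPerm n g) {k j : Fin (n + 1)} {x : ℤ}
    (hj : ((k.insertNth x g : Fin (n + 1) → ℤ) j).natAbs = n + 1) : j = k := by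
  induction j using k.succAboveCases with
  | x => rfl
  | p i =>
    rw [Fin.insertNth_apply_succAbove] at hj
    have := mem_Icc.mp (hg.1 i)
    omega

end IsSignedPerm

lemma sum_signedPerms_succ {M : Type*} [AddCommMonoid M] (F : (Fin (n + 1) → ℤ) → M) :
    ∑ g ∈ signedPerms (n + 1), F g =
      ∑ k : Fin (n + 1), ∑ g ∈ signedPerms n,
        (F (k.insertNth ((n + 1 : ℕ) : ℤ) g) + F (k.insertNth (-((n + 1 : ℕ) : ℤ)) g)) := by
  generalize hm : ((n + 1 : ℕ) : ℤ) = m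
  have hx {x : ℤ} : x ∈ ({m, -m} : Finset ℤ) ↔ x.natAbs = n + 1 := by
    rw [mem_insert, mem_singleton, Int.natAbs_eq_iff, hm]
  have hpair (k : Fin (n + 1)) (g : Fin n → ℤ) :
      F (k.insertNth m g) + F (k.insertNth (-m) g) = ∑ x ∈ {m, -m}, F (k.insertNth x g) :=
    (sum_pair (f := fun x => F (k.insertNth x g)) (show m ≠ -m by omega)).symm
  simp_rw [hpair, ← sum_product']
  symm
  refine sum_bij (fun a _ => a.1.insertNth a.2.2 a.2.1) ?_ ?_ ?_ fun _ _ => rfl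
  · simp only [mem_product, mem_univ, true_and, mem_signedPerms, and_imp, Prod.forall]
    exact fun k g x hg hgx => hg.insertNth k (hx.mp hgx)
  · simp only [mem_product, mem_univ, true_and, mem_signedPerms, and_imp, Prod.forall,
      Prod.mk.injEq]
    intro k g x hg hgx k' g' x' hg' _ h
    obtain rfl : k = k' :=
      hg'.eq_of_natAbs_insertNth (by rw [← h, Fin.insertNth_apply_same, hx.mp hgx])
    refine ⟨rfl, ?_, ?_⟩
    · simpa using congrArg k.removeNth h
    · simpa using congrFun h k
  · simp only [mem_product, mem_univ, true_and, mem_signedPerms, exists_prop, Prod.exists]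
    intro G hG
    obtain ⟨k, hk⟩ := hG.exists_natAbs_eq (m := n + 1) (by simp)
    exact ⟨k, k.removeNth G, G k, ⟨hG.removeNth hk, hx.mpr hk⟩,
      Fin.insertNth_self_removeNth k G⟩

def pairCount (P : ℤ → ℤ → Prop) [DecidableRel P] (g : Fin n → ℤ) : ℕ :=
  #{ij : Fin n × Fin n | ij.1 < ij.2 ∧ P (g ij.1) (g ij.2)}

lemma invL_eq_pairCount (g : Fin n → ℤ) : invL g = pairCount (fun a b => b < a) g := rfl

lemma n2L_eq_pairCount (g : Fin n → ℤ) : n2L g = pairCount (fun a b => a + b < 0) g := rfl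

lemma pairCount_congr (P : ℤ → ℤ → Prop) [DecidableRel P] {g g' : Fin n → ℤ}
    (h : ∀ i j, i < j → (P (g i) (g j) ↔ P (g' i) (g' j))) :
    pairCount P g = pairCount P g' :=
  congrArg card (filter_congr fun ij _ => and_congr_right (h ij.1 ij.2))

lemma pairCount_insertNth (P : ℤ → ℤ → Prop) [DecidableRel P] (k : Fin (n + 1)) (x : ℤ)
    (g : Fin n → ℤ) :
    pairCount P (k.insertNth x g) = pairCount P g + #{j : Fin n | (k : ℕ) ≤ j ∧ P x (g j)} +
      #{i : Fin n | (i : ℕ) < k ∧ P (g i) x} := by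
  simp only [pairCount, card_filter, Fintype.sum_prod_type, Fin.sum_univ_succAbove _ k,
    Fin.insertNth_apply_same, Fin.insertNth_apply_succAbove, lt_self_iff_false, false_and,
    if_false, Fin.succAbove_lt_succAbove_iff, Fin.lt_succAbove_iff_le_castSucc,
    Fin.succAbove_lt_iff_castSucc_lt, sum_add_distrib, zero_add]
  simp only [Fin.le_def, Fin.lt_def, Fin.val_castSucc]
  ring

lemma card_filter_le_val (m : ℕ) : #{i : Fin n | m ≤ (i : ℕ)} = n - m := by
  have := card_filter_add_card_filter_not (s := univ) fun i : Fin n => (i : ℕ) < m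
  simp only [not_lt, card_univ, Fintype.card_fin, Fin.card_filter_val_lt] at this
  omega

lemma n1F_insertNth (k : Fin (n + 1)) (x : ℤ) (g : Fin n → ℤ) :
    n1F (k.insertNth x g) = n1F g + if x < 0 then 1 else 0 := by
  simp only [n1F, card_filter, Fin.sum_univ_succAbove _ k, Fin.insertNth_apply_same,
    Fin.insertNth_apply_succAbove]
  ring

def rlmin (g : Fin n → ℤ) : Finset (Fin n) :=
  univ.filter fun i => 1 < g i ∧ ∀ j, i < j → g i < |g j|

def weight {M : Type*} [CommMonoid M] (q : M) (t : ℕ → M) (g : Fin n → ℤ) : M :=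
  q ^ (invL g + n2L g) * ∏ i ∈ rlmin g, t (g i).toNat

section Insertion

variable {g : Fin n → ℤ} {m : ℕ} {x : ℤ} {k : Fin (n + 1)}

lemma invL_insertNth_of_abs_lt (hg : ∀ i, |g i| < m) :
    invL (k.insertNth (m : ℤ) g) = invL g + (n - k) := by
  have hlt i : ¬ (m : ℤ) < g i := not_lt.mpr (abs_lt.mp (hg i)).2.le
  simp [invL_eq_pairCount, pairCount_insertNth, (abs_lt.mp (hg _)).2, hlt, card_filter_le_val]

lemma invL_insertNth_neg_of_abs_lt (hg : ∀ i, |g i| < m) :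
    invL (k.insertNth (-m : ℤ) g) = invL g + k := by
  have hlt i : ¬ g i < -m := not_lt.mpr (abs_lt.mp (hg i)).1.le
  simp [invL_eq_pairCount, pairCount_insertNth, (abs_lt.mp (hg _)).1, hlt,
    Fin.card_filter_val_lt, Nat.le_of_lt_succ k.isLt]

lemma n2L_insertNth_of_abs_lt (hg : ∀ i, |g i| < m) :
    n2L (k.insertNth (m : ℤ) g) = n2L g := by
  have hpos i : ¬ (m : ℤ) + g i < 0 := by linarith [(abs_lt.mp (hg i)).1]
  have hpos' i : ¬ g i + m < 0 := by linarith [(abs_lt.mp (hg i)).1]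
  simp [n2L_eq_pairCount, pairCount_insertNth, hpos, hpos']

lemma n2L_insertNth_neg_of_abs_lt (hg : ∀ i, |g i| < m) :
    n2L (k.insertNth (-m : ℤ) g) = n2L g + n := by
  have hneg i : -(m : ℤ) + g i < 0 := by linarith [(abs_lt.mp (hg i)).2]
  have hneg' i : g i + -m < 0 := by linarith [(abs_lt.mp (hg i)).2]
  simp only [n2L_eq_pairCount, pairCount_insertNth, hneg, hneg', and_true,
    card_filter_le_val, Fin.card_filter_val_lt, min_eq_right (Nat.le_of_lt_succ k.isLt)]
  omega

lemma self_mem_rlmin_insertNth_iff (hg : ∀ i, |g i| < |x|) :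
    k ∈ rlmin (k.insertNth x g) ↔ 1 < x ∧ k = Fin.last n := by
  simp only [rlmin, mem_filter, mem_univ, true_and, Fin.insertNth_apply_same]
  refine and_congr_right fun hx => ⟨fun h => ?_, fun h j hj => ?_⟩
  · by_contra hk
    have hlast := (Fin.le_last k).lt_of_ne hk
    obtain ⟨j, hj⟩ := Fin.exists_succAbove_eq hlast.ne'
    have := h _ hlast
    rw [← hj, Fin.insertNth_apply_succAbove] at this
    linarith [hg j, abs_of_pos (one_pos.trans hx)]
  · subst h
    exact absurd hj (not_lt.mpr (Fin.le_last j))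

lemma succAbove_mem_rlmin_insertNth_iff (hg : ∀ i, |g i| < |x|) (i : Fin n) :
    k.succAbove i ∈ rlmin (k.insertNth x g) ↔ i ∈ rlmin g := by
  simp only [rlmin, mem_filter, mem_univ, true_and, Fin.insertNth_apply_succAbove,
    Fin.forall_iff_succAbove k, Fin.insertNth_apply_same, Fin.succAbove_lt_succAbove_iff]
  exact and_congr_right fun _ => and_iff_right_of_imp fun _ _ => (le_abs_self _).trans_lt (hg i)

lemma prod_rlmin_insertNth {M : Type*} [CommMonoid M] (t : ℕ → M) (hg : ∀ i, |g i| < |x|) :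
    ∏ i ∈ rlmin (k.insertNth x g), t ((k.insertNth x g : Fin (n + 1) → ℤ) i).toNat =
      (if 1 < x ∧ k = Fin.last n then t x.toNat else 1) * ∏ i ∈ rlmin g, t (g i).toNat := by
  rw [← univ_inter (rlmin _), ← prod_ite_mem, Fin.prod_univ_succAbove _ k,
    ← univ_inter (rlmin g), ← prod_ite_mem]
  simp only [self_mem_rlmin_insertNth_iff hg, succAbove_mem_rlmin_insertNth_iff hg,
    Fin.insertNth_apply_same, Fin.insertNth_apply_succAbove]

lemma weight_insertNth_of_abs_lt {M : Type*} [CommMonoid M] (q : M) (t : ℕ → M)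
    (hg : ∀ i, |g i| < m) :
    weight q t (k.insertNth (m : ℤ) g) =
      q ^ (n - k) * (if 1 < m ∧ k = Fin.last n then t m else 1) * weight q t g := by
  rw [weight, weight, invL_insertNth_of_abs_lt hg, n2L_insertNth_of_abs_lt hg,
    prod_rlmin_insertNth t fun i => by simpa using hg i]
  simp only [Nat.one_lt_cast, Int.toNat_natCast, pow_add]
  ac_rfl

lemma weight_insertNth_neg_of_abs_lt {M : Type*} [CommMonoid M] (q : M) (t : ℕ → M)
    (hg : ∀ i, |g i| < m) :
    weight q t (k.insertNth (-m : ℤ) g) = q ^ (n + k) * weight q t g := by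
  rw [weight, weight, invL_insertNth_neg_of_abs_lt hg, n2L_insertNth_neg_of_abs_lt hg,
    prod_rlmin_insertNth t (fun i => by simpa using hg i), if_neg (by omega), one_mul]
  simp only [pow_add]
  ac_rfl

end Insertion

def flipOne (g : Fin n → ℤ) (i : Fin n) : ℤ := if (g i).natAbs = 1 then -g i else g i

lemma natAbs_flipOne (g : Fin n → ℤ) (i : Fin n) : (flipOne g i).natAbs = (g i).natAbs := by
  unfold flipOne
  split_ifs <;> simp

lemma flipOne_flipOne (g : Fin n → ℤ) : flipOne (flipOne g) = g := by
  funext i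
  rw [flipOne, natAbs_flipOne]
  unfold flipOne
  split_ifs <;> simp

lemma isSignedPerm_flipOne_iff {g : Fin n → ℤ} :
    IsSignedPerm n (flipOne g) ↔ IsSignedPerm n g := by
  simp only [IsSignedPerm, natAbs_flipOne]

section FlipOne

variable {g : Fin n → ℤ}

-- Only the entry `±1` changes sign; every other entry has absolute value at least `2`, so its
-- comparison with `±1` and the sign of its sum with `±1` do not see the flip.
lemma IsSignedPerm.flipOne_lt_flipOne_iff (hg : IsSignedPerm n g) {i j : Fin n} (hij : i ≠ j) :
    flipOne g j < flipOne g i ↔ g j < g i := by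
  have := mem_Icc.mp (hg.1 i); have := mem_Icc.mp (hg.1 j)
  have : (g i).natAbs ≠ (g j).natAbs := hg.2.ne hij
  unfold flipOne
  split_ifs <;> omega

lemma IsSignedPerm.flipOne_add_flipOne_neg_iff (hg : IsSignedPerm n g) {i j : Fin n}
    (hij : i ≠ j) : flipOne g i + flipOne g j < 0 ↔ g i + g j < 0 := by
  have := mem_Icc.mp (hg.1 i); have := mem_Icc.mp (hg.1 j)
  have : (g i).natAbs ≠ (g j).natAbs := hg.2.ne hij
  unfold flipOne
  split_ifs <;> omega

lemma IsSignedPerm.weight_flipOne {M : Type*} [CommMonoid M] (q : M) (t : ℕ → M)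
    (hg : IsSignedPerm n g) : weight q t (flipOne g) = weight q t g := by
  have hrlmin : rlmin (flipOne g) = rlmin g := by
    ext i
    simp only [rlmin, mem_filter, mem_univ, true_and, Int.abs_eq_natAbs, natAbs_flipOne]
    by_cases h : (g i).natAbs = 1
    · have : ¬ 1 < -g i ∧ ¬ 1 < g i := by omega
      simp [flipOne, h, this]
    · simp [flipOne, h]
  have hinv : invL (flipOne g) = invL g :=
    pairCount_congr (fun a b => b < a) fun _ _ hij => hg.flipOne_lt_flipOne_iff hij.ne
  have hn2 : n2L (flipOne g) = n2L g :=
    pairCount_congr (fun a b => a + b < 0) fun _ _ hij => hg.flipOne_add_flipOne_neg_iff hij.ne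
  rw [weight, weight, hinv, hn2, hrlmin]
  refine congrArg _ (prod_congr rfl fun i hi => ?_)
  have : 1 < g i := (mem_filter.mp hi).2.1
  rw [flipOne, if_neg (by omega)]

lemma IsSignedPerm.n1F_flipOne_mod_two (hg : IsSignedPerm n g) (hn : 1 ≤ n) :
    n1F (flipOne g) % 2 = 0 ↔ ¬ n1F g % 2 = 0 := by
  obtain ⟨k, hk⟩ := hg.exists_natAbs_eq (m := 1) (mem_Icc.mpr ⟨le_rfl, hn⟩)
  have hrest : ∀ i ∈ univ.erase k, flipOne g i = g i := fun i hi =>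
    if_neg fun h => ne_of_mem_erase hi (hg.2 (h.trans hk.symm))
  have hk' : flipOne g k = -g k := if_pos hk
  simp only [n1F, card_filter, ← add_sum_erase _ _ (mem_univ k), hk']
  rw [sum_congr rfl fun i hi => by rw [hrest i hi]]
  split_ifs <;> omega

end FlipOne

section CommSemiring

variable {R : Type*} [CommSemiring R] (q : R) (t : ℕ → R)

def evenSum (n : ℕ) : R := ∑ g ∈ (signedPerms n).filter (fun g => n1F g % 2 = 0), weight q t g

def oddSum (n : ℕ) : R :=
  ∑ g ∈ (signedPerms n).filter (fun g => ¬ n1F g % 2 = 0), weight q t g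

lemma evenSum_zero : evenSum q t 0 = 1 := by
  simp [evenSum, signedPerms, n1F, weight, invL, n2L, rlmin,
    card_image_of_injective _ wVal_injective]

lemma oddSum_zero : oddSum q t 0 = 0 := by
  simp [oddSum, n1F]

lemma evenSum_eq_oddSum (hn : 1 ≤ n) : evenSum q t n = oddSum q t n := by
  refine sum_nbij' flipOne flipOne ?_ ?_ (fun g _ => flipOne_flipOne g)
    (fun g _ => flipOne_flipOne g) fun g hg => ?_
  · simp only [mem_filter, mem_signedPerms]
    exact fun g ⟨hg, he⟩ =>
      ⟨isSignedPerm_flipOne_iff.mpr hg, fun h => (hg.n1F_flipOne_mod_two hn).mp h he⟩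
  · simp only [mem_filter, mem_signedPerms]
    exact fun g ⟨hg, he⟩ =>
      ⟨isSignedPerm_flipOne_iff.mpr hg, (hg.n1F_flipOne_mod_two hn).mpr he⟩
  · exact ((mem_signedPerms.mp (mem_filter.mp hg).1).weight_flipOne q t).symm

lemma evenSum_succ : evenSum q t (n + 1) =
    (∑ k : Fin (n + 1), q ^ (n - k) * if 1 < n + 1 ∧ k = Fin.last n then t (n + 1) else 1) *
        evenSum q t n + (∑ k : Fin (n + 1), q ^ (n + k)) * oddSum q t n := by
  have hterm (k : Fin (n + 1)) (g : Fin n → ℤ) (hg : g ∈ signedPerms n) :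
      ((if n1F (k.insertNth ((n + 1 : ℕ) : ℤ) g) % 2 = 0 then
          weight q t (k.insertNth ((n + 1 : ℕ) : ℤ) g) else 0) +
        if n1F (k.insertNth (-((n + 1 : ℕ) : ℤ)) g) % 2 = 0 then
          weight q t (k.insertNth (-((n + 1 : ℕ) : ℤ)) g) else 0) =
      q ^ (n - k) * (if 1 < n + 1 ∧ k = Fin.last n then t (n + 1) else 1) *
          (if n1F g % 2 = 0 then weight q t g else 0) +
        q ^ (n + k) * (if ¬ n1F g % 2 = 0 then weight q t g else 0) := by
    have hlt := (mem_signedPerms.mp hg).abs_lt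
    have hpos : ¬ ((n + 1 : ℕ) : ℤ) < 0 := by omega
    have hneg : -((n + 1 : ℕ) : ℤ) < 0 := by omega
    have hodd : (n1F g + 1) % 2 = 0 ↔ ¬ n1F g % 2 = 0 := by omega
    simp only [n1F_insertNth, hpos, hneg, if_true, if_false, add_zero, hodd,
      weight_insertNth_of_abs_lt q t hlt, weight_insertNth_neg_of_abs_lt q t hlt]
    by_cases he : n1F g % 2 = 0 <;> simp [he]
  rw [evenSum, sum_filter, sum_signedPerms_succ,
    sum_congr rfl fun k _ => sum_congr rfl (hterm k)]
  simp only [sum_add_distrib, ← mul_sum, ← sum_mul, ← sum_filter]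
  rfl

end CommSemiring

section CommRing

variable {R : Type*} [CommRing R] (q : R) (t : ℕ → R)

lemma sum_fin_pow_sub (n : ℕ) : ∑ k : Fin (n + 1), q ^ (n - k) = qInt q (n + 1) := by
  rw [Fin.sum_univ_eq_sum_range (fun k => q ^ (n - k)), qInt, ← sum_range_reflect]
  exact sum_congr rfl fun j hj => by
    rw [Nat.add_sub_cancel, Nat.sub_sub_self (Nat.lt_succ_iff.mp (mem_range.mp hj))]

lemma sum_fin_pow_add (n : ℕ) : ∑ k : Fin (n + 1), q ^ (n + k) = q ^ n * qInt q (n + 1) := by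
  rw [Fin.sum_univ_eq_sum_range (fun k => q ^ (n + k)), qInt, mul_sum]
  simp only [pow_add]

lemma sum_insertion_factors (hn : 1 ≤ n) :
    (∑ k : Fin (n + 1), q ^ (n - k) * if 1 < n + 1 ∧ k = Fin.last n then t (n + 1) else 1) +
      ∑ k : Fin (n + 1), q ^ (n + k) = (1 + q ^ n) * qInt q (n + 1) - 1 + t (n + 1) := by
  have hk (k : Fin (n + 1)) :
      (q ^ (n - k) * if 1 < n + 1 ∧ k = Fin.last n then t (n + 1) else 1) =
        q ^ (n - k) + if k = Fin.last n then t (n + 1) - 1 else 0 := by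
    by_cases hlast : k = Fin.last n
    · simp [hlast, show 1 < n + 1 by omega]
    · simp [hlast]
  simp only [hk, sum_add_distrib, sum_ite_eq', mem_univ, if_true, sum_fin_pow_sub,
    sum_fin_pow_add]
  ring

lemma evenSum_eq_prod (hn : 1 ≤ n) :
    evenSum q t n = ∏ i ∈ Icc 2 n, ((1 + q ^ (i - 1)) * qInt q i - 1 + t i) := by
  induction n, hn using Nat.le_induction with
  | base => simp [evenSum_succ, evenSum_zero, oddSum_zero]
  | succ n hn ih =>
    rw [evenSum_succ, ← evenSum_eq_oddSum q t hn, ← add_mul, sum_insertion_factors q t hn, ih,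
      prod_Icc_succ_top (by omega), Nat.add_sub_cancel, mul_comm]

end CommRing

end

/-- Joint distribution of `(ℓ_D, Rlmin_D)` over the even-signed permutation group `D_n`. -/
theorem stmt14 (n : ℕ) (hn : 1 ≤ n) (R : Type*) [CommRing R] (q : R) (t : ℕ → R) :
    ∑ p ∈ Finset.univ.filter
        (fun p : Equiv.Perm (Fin n) × (Fin n → Bool) => n1F (wVal p) % 2 = 0),
        q ^ (invL (wVal p) + n2L (wVal p)) *
          ∏ i ∈ Finset.univ.filter
              (fun i : Fin n => 1 < wVal p i ∧ ∀ j, i < j → wVal p i < |wVal p j|),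
            t (wVal p i).toNat
      = ∏ i ∈ Finset.Icc 2 n, ((1 + q ^ (i - 1)) * qInt q i - 1 + t i) := by
  rw [← evenSum_eq_prod q t hn, evenSum, signedPerms, filter_image,
    sum_image wVal_injective.injOn]
  rfl
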